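/- Let ψ be an n-qubit pure state and ε ≥ 0 such that |⟨ψ|W_x|ψ⟩| ≤ ε for every x ∈ 𝔽₂^{2n} with x ≠ 0. Then η(ψ) := 2ⁿ Σ_{x∈𝔽₂^{2n}} q_ψ(x) p_ψ(x) ≤ (1 + (4ⁿ − 1)ε⁶)/2ⁿ. -/

import Mathlib

open scoped BigOperators
open Finset

noncomputable section

/-- Length-`n` bit strings, i.e. `𝔽₂ⁿ`. -/
abbrev BV (n : ℕ) := Fin n → ZMod 2

/-- Integer-valued inner product: number of coordinates where both strings are 1. -/
def bdot {n : ℕ} (p q : BV n) : ℕ :=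
  (Finset.univ.filter (fun i => p i = 1 ∧ q i = 1)).card

/-- The Weyl operator `W_x` for `x = (p, q) ∈ 𝔽₂^{2n}`:
`W_x |b⟩ = i^{p·q} (−1)^{q·b} |b ⊕ p⟩`. -/
def Weyl {n : ℕ} (x : BV n × BV n) : Matrix (BV n) (BV n) ℂ :=
  Matrix.of fun r c => if r = c + x.1 then Complex.I ^ bdot x.1 x.2 * (-1 : ℂ) ^ bdot x.2 c else 0

/-- `⟨ψ|W_x|ψ⟩`. -/
def weylExp {n : ℕ} (ψ : BV n → ℂ) (x : BV n × BV n) : ℂ :=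
  ∑ r : BV n, (starRingEnd ℂ) (ψ r) * ((Weyl x).mulVec ψ r)

/-- `ψ` is an `n`-qubit pure state, i.e. a unit vector in `ℂ^{2ⁿ}`. -/
def IsState {n : ℕ} (ψ : BV n → ℂ) : Prop :=
  ∑ b : BV n, ‖ψ b‖ ^ 2 = 1

/-- The characteristic distribution `p_ψ(x) = 2^{−n} |⟨ψ|W_x|ψ⟩|²`. -/
def charDist {n : ℕ} (ψ : BV n → ℂ) (x : BV n × BV n) : ℝ :=
  (2 ^ n : ℝ)⁻¹ * ‖weylExp ψ x‖ ^ 2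

/-- The Weyl distribution `q_ψ(x) = Σ_y p_ψ(y) p_ψ(x ⊕ y)`. -/
def weylDist {n : ℕ} (ψ : BV n → ℂ) (x : BV n × BV n) : ℝ :=
  ∑ y : BV n × BV n, charDist ψ y * charDist ψ (x + y)

/-- Fourier coefficient `f̂(s) = 4^{−n} Σ_x f(x) (−1)^{x·s}` for `f : 𝔽₂^{2n} → ℝ`. -/
def booleanFourier {n : ℕ} (f : BV n × BV n → ℝ) (s : BV n × BV n) : ℝ :=
  (4 ^ n : ℝ)⁻¹ * ∑ x : BV n × BV n, f x * (-1 : ℝ) ^ (bdot x.1 s.1 + bdot x.2 s.2)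

/-- The Hadamard gate on qubit `j`. -/
def Hgate {n : ℕ} (j : Fin n) : Matrix (BV n) (BV n) ℂ :=
  Matrix.of fun r c =>
    if ∀ i, i ≠ j → r i = c i then
      (((Real.sqrt 2 : ℝ) : ℂ))⁻¹ * (-1 : ℂ) ^ ((r j).val * (c j).val)
    else 0

/-- The phase gate `S = diag(1, i)` on qubit `j`. -/
def Sgate {n : ℕ} (j : Fin n) : Matrix (BV n) (BV n) ℂ :=
  Matrix.of fun r c => if r = c then Complex.I ^ (r j).val else 0

/-- The CNOT gate with control qubit `j` and target qubit `k`. -/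
def CNOTgate {n : ℕ} (j k : Fin n) : Matrix (BV n) (BV n) ℂ :=
  Matrix.of fun r c => if r = Function.update c k (c k + c j) then 1 else 0

/-- The generators of the `n`-qubit Clifford group. -/
def cliffordGens (n : ℕ) : Set (Matrix (BV n) (BV n) ℂ) :=
  {M | (∃ j, M = Hgate j) ∨ (∃ j, M = Sgate j) ∨ (∃ j k, j ≠ k ∧ M = CNOTgate j k)}

/-- The `n`-qubit Clifford group `𝒞ₙ`: all finite products of the generators.
(Each generator has finite order, so this coincides with the generated group.) -/
def CliffordGroup (n : ℕ) : Submonoid (Matrix (BV n) (BV n) ℂ) :=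
  Submonoid.closure (cliffordGens n)

/-- The all-zeros basis state `|0ⁿ⟩`. -/
def e0 {n : ℕ} : BV n → ℂ := fun b => if b = 0 then 1 else 0

/-- The set of `n`-qubit stabilizer states `𝒮ₙ = {C|0ⁿ⟩ : C ∈ 𝒞ₙ}`. -/
def stabStates (n : ℕ) : Set (BV n → ℂ) :=
  {φ | ∃ C ∈ CliffordGroup n, φ = C.mulVec e0}

/-- The inner product `⟨φ|ψ⟩`. -/
def innerC {n : ℕ} (φ ψ : BV n → ℂ) : ℂ := ∑ b : BV n, (starRingEnd ℂ) (φ b) * ψ b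

/-- The stabilizer fidelity `F_𝒮(ψ) = max_{φ ∈ 𝒮ₙ} |⟨φ|ψ⟩|²`. -/
def stabFidelity {n : ℕ} (ψ : BV n → ℂ) : ℝ :=
  sSup {r | ∃ φ ∈ stabStates n, r = ‖innerC φ ψ‖ ^ 2}

/-- The stabilizer extent `ξ(ψ)`: the minimum of `(Σᵢ |cᵢ|)²` over all finite
decompositions `ψ = Σᵢ cᵢ φᵢ` with stabilizer states `φᵢ`. -/
def stabExtent {n : ℕ} (ψ : BV n → ℂ) : ℝ :=
  sInf {r | ∃ (m : ℕ) (c : Fin m → ℂ) (φ : Fin m → (BV n → ℂ)),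
    (∀ i, φ i ∈ stabStates n) ∧ ψ = ∑ i, c i • φ i ∧
    r = (∑ i, ‖c i‖) ^ 2}

/-- The T-gate `T = diag(1, e^{iπ/4})` on qubit `j`. -/
def Tgate {n : ℕ} (j : Fin n) : Matrix (BV n) (BV n) ℂ :=
  Matrix.of fun r c => if r = c then Complex.exp (Complex.I * Real.pi / 4) ^ (r j).val else 0

/-- The `m`-fold tensor power `|T⟩^{⊗m}` of `|T⟩ = (|0⟩ + e^{iπ/4}|1⟩)/√2`. -/
def TstateM (m : ℕ) : BV m → ℂ :=
  fun b => ∏ i : Fin m, ((((Real.sqrt 2 : ℝ) : ℂ))⁻¹ * Complex.exp (Complex.I * Real.pi / 4) ^ (b i).val)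

end

/-!
Write `N(x) = ‖⟨ψ|W_x|ψ⟩‖²`. Up to a phase, `⟨ψ|W_(p,q)|ψ⟩` is the Walsh transform in `q` of
`b ↦ conj (ψ b) * ψ (b + p)`, and the autocorrelations of these functions are symmetric in the
shift `p` and the lag. Applying the Wiener–Khinchin identity (the Walsh transform of an
autocorrelation is the power spectrum) in both coordinates shows that `N` is an eigenfunction of
the symplectic Fourier transform: `∑ x, N x * (-1) ^ [s, x] = 2ⁿ N s`. Expanding `N (x + y)` by
this identity collapses `∑ x y, N x * N y * N (x + y)` to `2ⁿ ∑ z, N z ^ 3`, so that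
`η(ψ) = 2⁻ⁿ ∑ x, N x ^ 3`; there `N 0 = 1` and each of the other `4ⁿ - 1` terms is at most `ε⁶`.
-/

open ComplexConjugate

namespace BV

variable {n : ℕ}

lemma neg_eq (a : BV n) : -a = a := funext fun i => ZMod.neg_eq_self_mod_two (a i)

lemma add_self (a : BV n) : a + a = 0 := neg_eq_iff_add_eq_zero.mp (neg_eq a)

lemma add_add_cancel_right (a b : BV n) : a + b + b = a := by
  rw [add_assoc, add_self, add_zero]

end BV

section Sign

variable {n : ℕ}

lemma bdot_comm (p q : BV n) : bdot p q = bdot q p := by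
  simp only [bdot, and_comm]

lemma bdot_zero_left (q : BV n) : bdot 0 q = 0 := by
  simp [bdot]

lemma natCast_bdot (p q : BV n) : (bdot p q : ZMod 2) = p ⬝ᵥ q := by
  rw [bdot, Finset.card_filter, Nat.cast_sum, dotProduct]
  refine Finset.sum_congr rfl fun i _ => ?_
  generalize p i = a; generalize q i = b
  revert a b; decide

variable {R : Type*} [Ring R]

lemma neg_one_pow_bdot_add_right (v a b : BV n) :
    (-1 : R) ^ bdot v (a + b) = (-1) ^ bdot v a * (-1) ^ bdot v b := by
  rw [← pow_add, neg_one_pow_eq_pow_mod_two, neg_one_pow_eq_pow_mod_two (bdot v a + bdot v b)]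
  congr 1
  apply (ZMod.natCast_eq_natCast_iff' _ _ 2).mp
  push_cast [natCast_bdot, dotProduct_add]
  rfl

lemma neg_one_pow_bdot_add_left (v a b : BV n) :
    (-1 : R) ^ bdot (a + b) v = (-1) ^ bdot a v * (-1) ^ bdot b v := by
  simp only [bdot_comm _ v, neg_one_pow_bdot_add_right]

lemma neg_one_pow_bdot_mul_self (v a : BV n) : (-1 : R) ^ bdot v a * (-1) ^ bdot v a = 1 := by
  rw [← pow_add, (Even.add_self _).neg_one_pow]

lemma sum_neg_one_pow_bdot [NoZeroDivisors R] [CharZero R] (w : BV n) :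
    ∑ q : BV n, (-1 : R) ^ bdot q w = if w = 0 then 2 ^ n else 0 := by
  split_ifs with hw
  · simp [hw, bdot_comm _ (0 : BV n), bdot_zero_left, ZMod.card]
  obtain ⟨i, hi⟩ : ∃ i, w i ≠ 0 := by simpa [funext_iff] using hw
  have hwi : w i = 1 := by revert hi; generalize w i = a; revert a; decide
  have hflip : (-1 : R) ^ bdot (Pi.single i 1) w = -1 := by
    rw [neg_one_pow_eq_pow_mod_two, ← ZMod.val_natCast, natCast_bdot, single_dotProduct, one_mul,
      hwi, ZMod.val_one, pow_one]
  have hshift := Equiv.sum_comp (Equiv.addRight (Pi.single i 1 : BV n)) fun q => (-1 : R) ^ bdot q w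
  simp only [Equiv.coe_addRight, neg_one_pow_bdot_add_left, hflip, mul_neg_one,
    Finset.sum_neg_distrib] at hshift
  exact CharZero.neg_eq_self_iff.mp hshift

end Sign

section Walsh

variable {n : ℕ}

def walsh (f : BV n → ℂ) (s : BV n) : ℂ := ∑ b, (-1 : ℂ) ^ bdot s b * f b

def autocorr (g : BV n → ℂ) (s : BV n) : ℂ := ∑ b, conj (g b) * g (b + s)

lemma walsh_walsh (f : BV n → ℂ) (s : BV n) : walsh (walsh f) s = 2 ^ n * f s := by
  have hzero : ∀ b : BV n, s + b = 0 ↔ s = b := fun b => by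
    rw [add_eq_zero_iff_eq_neg, BV.neg_eq]
  calc walsh (walsh f) s = ∑ b, (∑ q : BV n, (-1 : ℂ) ^ bdot q (s + b)) * f b := by
        simp only [walsh, Finset.mul_sum, Finset.sum_mul]
        rw [Finset.sum_comm]
        refine Finset.sum_congr rfl fun b _ => Finset.sum_congr rfl fun q _ => ?_
        rw [neg_one_pow_bdot_add_right, bdot_comm s]
        ring
    _ = 2 ^ n * f s := by
        simp [sum_neg_one_pow_bdot, hzero]

lemma walsh_autocorr (g : BV n → ℂ) (s : BV n) : walsh (autocorr g) s = ‖walsh g s‖ ^ 2 := by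
  rw [← Complex.conj_mul', walsh, walsh, map_sum, Finset.sum_mul_sum]
  simp only [autocorr, Finset.mul_sum]
  rw [Finset.sum_comm]
  refine Finset.sum_congr rfl fun b _ => ?_
  rw [← Equiv.sum_comp (Equiv.addLeft b) fun c =>
    conj ((-1) ^ bdot s b * g b) * ((-1) ^ bdot s c * g c)]
  refine Finset.sum_congr rfl fun p _ => ?_
  simp only [Equiv.coe_addLeft, map_mul, map_pow, map_neg, map_one, neg_one_pow_bdot_add_right]
  linear_combination -(-1 : ℂ) ^ bdot s p * conj (g b) * g (b + p) *
    neg_one_pow_bdot_mul_self (R := ℂ) s b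

lemma walsh_sq_norm_walsh (g : BV n → ℂ) (s : BV n) :
    walsh (fun q => (‖walsh g q‖ : ℂ) ^ 2) s = 2 ^ n * autocorr g s := by
  simp only [← walsh_autocorr]
  exact walsh_walsh _ _

end Walsh

section Weyl

variable {n : ℕ}

def shiftProd (ψ : BV n → ℂ) (p : BV n) : BV n → ℂ := fun b => conj (ψ b) * ψ (b + p)

lemma weylExp_eq_walsh (ψ : BV n → ℂ) (x : BV n × BV n) :
    weylExp ψ x =
      Complex.I ^ bdot x.1 x.2 * (-1) ^ bdot x.2 x.1 * walsh (shiftProd ψ x.1) x.2 := by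
  have hrow : ∀ r c : BV n, r = c + x.1 ↔ c = r + x.1 := fun r c => by
    constructor <;> rintro rfl <;> rw [BV.add_add_cancel_right]
  simp only [weylExp, Weyl, walsh, shiftProd, Matrix.mulVec, dotProduct, Matrix.of_apply, hrow,
    ite_mul, zero_mul, Finset.sum_ite_eq', Finset.mem_univ, if_true, Finset.mul_sum]
  refine Finset.sum_congr rfl fun b _ => ?_
  rw [neg_one_pow_bdot_add_right]
  ring

lemma norm_weylExp (ψ : BV n → ℂ) (x : BV n × BV n) :
    ‖weylExp ψ x‖ = ‖walsh (shiftProd ψ x.1) x.2‖ := by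
  simp [weylExp_eq_walsh]

lemma norm_weylExp_zero {ψ : BV n → ℂ} (hψ : IsState ψ) : ‖weylExp ψ 0‖ = 1 := by
  simp [norm_weylExp, walsh, shiftProd, bdot_zero_left, Complex.conj_mul', ← Complex.ofReal_pow,
    ← Complex.ofReal_sum, show ∑ b, ‖ψ b‖ ^ 2 = 1 from hψ]

lemma autocorr_shiftProd_comm (ψ : BV n → ℂ) (p s : BV n) :
    autocorr (shiftProd ψ p) s = autocorr (shiftProd ψ s) p := by
  simp only [autocorr, shiftProd, map_mul, Complex.conj_conj]
  refine Finset.sum_congr rfl fun b _ => ?_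
  rw [add_right_comm b s p]
  ring

end Weyl

section Symplectic

variable {n : ℕ}

/-- The symplectic form `[s, x]` of `𝔽₂^{2n}`, computed in `ℕ`: only its parity is meaningful. -/
def sympDot (s x : BV n × BV n) : ℕ := bdot s.2 x.1 + bdot s.1 x.2

lemma sympDot_comm (s x : BV n × BV n) : sympDot s x = sympDot x s := by
  rw [sympDot, sympDot, bdot_comm s.2, bdot_comm s.1, add_comm]

lemma neg_one_pow_sympDot_add_right {R : Type*} [CommRing R] (z x y : BV n × BV n) :
    (-1 : R) ^ sympDot z (x + y) = (-1) ^ sympDot z x * (-1) ^ sympDot z y := by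
  simp only [sympDot, Prod.fst_add, Prod.snd_add, pow_add, neg_one_pow_bdot_add_right]
  ring

lemma sum_mul_mul_add_eq_of_sympDot_eigen {K : Type*} [Field K] {f : BV n × BV n → K}
    {c : K} (hc : c ≠ 0) (hf : ∀ s, ∑ x, f x * (-1) ^ sympDot s x = c * f s) :
    ∑ x, ∑ y, f x * f y * f (x + y) = c * ∑ z, f z ^ 3 := by
  apply mul_left_cancel₀ hc
  calc c * ∑ x, ∑ y, f x * f y * f (x + y)
      = ∑ x, ∑ y, f x * f y * ∑ z, f z * (-1) ^ sympDot (x + y) z := by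
        simp only [hf, Finset.mul_sum]
        refine Finset.sum_congr rfl fun x _ => Finset.sum_congr rfl fun y _ => ?_
        ring
    _ = ∑ x, ∑ y, ∑ z, f z * (f y * (-1) ^ sympDot z y) * (f x * (-1) ^ sympDot z x) := by
        simp only [Finset.mul_sum]
        refine Finset.sum_congr rfl fun x _ => Finset.sum_congr rfl fun y _ =>
          Finset.sum_congr rfl fun z _ => ?_
        rw [sympDot_comm, neg_one_pow_sympDot_add_right]
        ring
    _ = ∑ z, ∑ x, ∑ y, f z * (f y * (-1) ^ sympDot z y) * (f x * (-1) ^ sympDot z x) :=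
        (Finset.sum_congr rfl fun x _ => Finset.sum_comm).trans Finset.sum_comm
    _ = ∑ z, f z * (∑ y, f y * (-1) ^ sympDot z y) * (∑ x, f x * (-1) ^ sympDot z x) := by
        simp only [Finset.mul_sum, Finset.sum_mul]
    _ = c * (c * ∑ z, f z ^ 3) := by
        simp only [hf, Finset.mul_sum]
        refine Finset.sum_congr rfl fun z _ => ?_
        ring

lemma sum_sq_norm_weylExp_mul_neg_one_pow_sympDot (ψ : BV n → ℂ) (s : BV n × BV n) :
    ∑ x, ‖weylExp ψ x‖ ^ 2 * (-1 : ℝ) ^ sympDot s x = 2 ^ n * ‖weylExp ψ s‖ ^ 2 := by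
  apply Complex.ofReal_injective
  push_cast
  simp only [norm_weylExp, Fintype.sum_prod_type, sympDot, pow_add]
  calc ∑ p, ∑ q, (‖walsh (shiftProd ψ p) q‖ : ℂ) ^ 2 * ((-1) ^ bdot s.2 p * (-1) ^ bdot s.1 q)
      = ∑ p, (-1) ^ bdot s.2 p * walsh (fun q => (‖walsh (shiftProd ψ p) q‖ : ℂ) ^ 2) s.1 := by
        simp only [walsh, Finset.mul_sum]
        refine Finset.sum_congr rfl fun p _ => Finset.sum_congr rfl fun q _ => ?_
        ring
    _ = 2 ^ n * walsh (autocorr (shiftProd ψ s.1)) s.2 := by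
        simp_rw [walsh_sq_norm_walsh, autocorr_shiftProd_comm ψ _ s.1]
        rw [walsh, Finset.mul_sum]
        refine Finset.sum_congr rfl fun p _ => ?_
        ring
    _ = 2 ^ n * ‖walsh (shiftProd ψ s.1) s.2‖ ^ 2 := by
        rw [walsh_autocorr]

end Symplectic

section Eta

variable {n : ℕ}

lemma two_pow_mul_sum_weylDist_mul_charDist (ψ : BV n → ℂ) :
    (2 ^ n : ℝ) * ∑ x, weylDist ψ x * charDist ψ x = (2 ^ n)⁻¹ * ∑ x, ‖weylExp ψ x‖ ^ 6 := by
  have hcubic := sum_mul_mul_add_eq_of_sympDot_eigen (f := fun x => ‖weylExp ψ x‖ ^ 2)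
    (by positivity) (sum_sq_norm_weylExp_mul_neg_one_pow_sympDot ψ)
  calc (2 ^ n : ℝ) * ∑ x, weylDist ψ x * charDist ψ x
      = ((2 ^ n)⁻¹) ^ 2 * ∑ x, ∑ y, ‖weylExp ψ x‖ ^ 2 * ‖weylExp ψ y‖ ^ 2 *
          ‖weylExp ψ (x + y)‖ ^ 2 := by
        simp only [weylDist, charDist, Finset.sum_mul, Finset.mul_sum]
        refine Finset.sum_congr rfl fun x _ => Finset.sum_congr rfl fun y _ => ?_
        field_simp
    _ = (2 ^ n)⁻¹ * ∑ x, ‖weylExp ψ x‖ ^ 6 := by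
        simp only [hcubic, ← pow_mul]
        field_simp

lemma sum_norm_weylExp_pow_six_le {ψ : BV n → ℂ} (hψ : IsState ψ) {ε : ℝ}
    (hsmall : ∀ x : BV n × BV n, x ≠ 0 → ‖weylExp ψ x‖ ≤ ε) :
    ∑ x, ‖weylExp ψ x‖ ^ 6 ≤ 1 + ((4 : ℝ) ^ n - 1) * ε ^ 6 := by
  have hcard : Fintype.card (BV n × BV n) = 4 ^ n := by
    simp [Fintype.card_prod, ZMod.card, ← mul_pow]
  rw [← Finset.add_sum_erase _ _ (Finset.mem_univ 0), norm_weylExp_zero hψ, one_pow]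
  gcongr
  calc ∑ x ∈ Finset.univ.erase 0, ‖weylExp ψ x‖ ^ 6
      ≤ #(Finset.univ.erase (0 : BV n × BV n)) • ε ^ 6 :=
        Finset.sum_le_card_nsmul _ _ _ fun x hx =>
          pow_le_pow_left₀ (norm_nonneg _) (hsmall x (Finset.ne_of_mem_erase hx)) 6
    _ = ((4 : ℝ) ^ n - 1) * ε ^ 6 := by
        rw [Finset.card_erase_of_mem (Finset.mem_univ _), Finset.card_univ, nsmul_eq_mul,
          Nat.cast_pred Fintype.card_pos, hcard]
        push_cast
        ring

end Eta

theorem eta_upper_bound_of_small_weyl_general {n : ℕ} (ψ : BV n → ℂ)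
    (hψ : IsState ψ) (ε : ℝ)
    (hsmall : ∀ x : BV n × BV n, x ≠ 0 → ‖weylExp ψ x‖ ≤ ε) :
    (2 ^ n : ℝ) * ∑ x : BV n × BV n, weylDist ψ x * charDist ψ x ≤
      (1 + ((4 : ℝ) ^ n - 1) * ε ^ 6) / 2 ^ n := by
  rw [two_pow_mul_sum_weylDist_mul_charDist, ← inv_mul_eq_div]
  gcongr
  exact sum_norm_weylExp_pow_six_le hψ hsmall

/-- if |⟨ψ|W_x|ψ⟩| ≤ ε for every x ≠ 0, then
η(ψ) = 2ⁿ Σ_x q_ψ(x) p_ψ(x) ≤ (1 + (4ⁿ − 1)ε⁶)/2ⁿ. -/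
theorem eta_upper_bound_of_small_weyl {n : ℕ} (hn : 1 ≤ n) (ψ : BV n → ℂ)
    (hψ : IsState ψ) (ε : ℝ) (hε : 0 ≤ ε)
    (hsmall : ∀ x : BV n × BV n, x ≠ 0 → ‖weylExp ψ x‖ ≤ ε) :
    (2 ^ n : ℝ) * ∑ x : BV n × BV n, weylDist ψ x * charDist ψ x ≤
      (1 + ((4 : ℝ) ^ n - 1) * ε ^ 6) / 2 ^ n :=
  eta_upper_bound_of_small_weyl_general ψ hψ ε hsmall
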